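/- arXiv:1303.5334 — 2 statements merged into one kernel-verified Lean document; each statement's English description precedes it below -/
import Mathlib

section
/- Let S ⊂ ℝ^{n+1} be an (n+1)-dimensional simplex with vertices v_0, …, v_{n+1}. For each vertex v, let n_v be the inward unit normal to the facet F_v opposite v, and for a sign distribution φ : Vert(S) → {±1} define the cone C_φ = {x ∈ ℝ^{n+1} : φ(v)·(n_v · x) ≥ 0 for all vertices v}. Fix φ(v_0) = −1. Then the cone generated by the vectors w_e, where e runs over edges of S whose endpoints carry opposite signs under φ and w_e is the edge vector oriented from the '−' endpoint to the '+' endpoint, equals C_φ. -/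
open scoped RealInnerProductSpace
open Finset

private lemma simplex_decomp {n : ℕ}
    (v N : Fin (n + 2) → EuclideanSpace ℝ (Fin (n + 1)))
    (hv : AffineIndependent ℝ v)
    (hNorth : ∀ i j k, j ≠ i → k ≠ i → ⟪N i, v j - v k⟫ = 0)
    (D : Fin (n + 2) → ℝ) (hD0 : ∀ k, D k ≠ 0)
    (hD : ∀ k p, p ≠ k → ⟪N k, v k - v p⟫ = D k)
    (p : Fin (n + 2)) (x : EuclideanSpace ℝ (Fin (n + 1))) :
    ∑ k, (if k = p then 0 else ⟪N k, x⟫ / D k) • (v k - v p) = x := by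
  haveI : Nonempty {k : Fin (n + 2) // k ≠ p} := by
    obtain ⟨q, hq⟩ := exists_ne p
    exact ⟨⟨q, hq⟩⟩
  have hli : LinearIndependent ℝ fun i : {k : Fin (n + 2) // k ≠ p} => v i - v p := by
    have := (affineIndependent_iff_linearIndependent_vsub ℝ v p).mp hv
    simpa using this
  have hcard : Fintype.card {k : Fin (n + 2) // k ≠ p}
      = Module.finrank ℝ (EuclideanSpace ℝ (Fin (n + 1))) := by
    simp [Fintype.card_subtype_compl, finrank_euclideanSpace_fin]
  let b := basisOfLinearIndependentOfCardEqFinrank hli hcard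
  have hb : ∀ k : {k : Fin (n + 2) // k ≠ p}, b k = v k - v p := fun k =>
    congrFun (coe_basisOfLinearIndependentOfCardEqFinrank hli hcard) k
  have hrepr : ∀ m : {k : Fin (n + 2) // k ≠ p}, b.repr x m = ⟪N m, x⟫ / D m := by
    intro m
    have h1 : ⟪N m.1, x⟫ = ∑ k : {k : Fin (n + 2) // k ≠ p},
        b.repr x k * ⟪N m.1, v k - v p⟫ := by
      conv_lhs => rw [← b.sum_repr x]
      rw [inner_sum]
      refine Finset.sum_congr rfl fun k _ => ?_
      rw [hb k, real_inner_smul_right]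
    rw [Finset.sum_eq_single m] at h1
    · rw [hD m.1 p (Ne.symm m.2)] at h1
      rw [eq_div_iff (hD0 m.1), ← h1]
    · intro k _ hk
      rw [hNorth m.1 k.1 p (fun h => hk (Subtype.ext h)) (Ne.symm m.2), mul_zero]
    · intro h; exact absurd (Finset.mem_univ m) h
  have key : ∑ k : {k : Fin (n + 2) // k ≠ p}, (⟪N k.1, x⟫ / D k.1) • (v k.1 - v p) = x := by
    conv_rhs => rw [← b.sum_repr x]
    refine Finset.sum_congr rfl fun k _ => ?_
    rw [hrepr k, hb k]
  calc ∑ k, (if k = p then 0 else ⟪N k, x⟫ / D k) • (v k - v p)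
      = ∑ k ∈ univ.erase p, (if k = p then 0 else ⟪N k, x⟫ / D k) • (v k - v p) :=
        (Finset.sum_erase _ (by simp)).symm
    _ = ∑ k : {k : Fin (n + 2) // k ≠ p},
          (if k.1 = p then 0 else ⟪N k.1, x⟫ / D k.1) • (v k.1 - v p) :=
        Finset.sum_subtype _ (by simp) _
    _ = x := by
        refine Eq.trans ?_ key
        exact Finset.sum_congr rfl fun k _ => by rw [if_neg k.2]

/-- for a full-dimensional simplex `S ⊂ ℝ^{n+1}` with inward facet normals
`N i`, and a sign distribution `φ` taking both values with `φ 0 = −1`, the cone generated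
by the edge vectors `v j − v i` over edges whose endpoints carry opposite signs (oriented
from the `−` endpoint to the `+` endpoint) equals the curvature cone
`C_φ = {x : φ i · ⟪N i, x⟫ ≥ 0 for all vertices i}`. -/
theorem curvature_cone_eq_edge_cone {n : ℕ}
    (v : Fin (n + 2) → EuclideanSpace ℝ (Fin (n + 1)))
    (hv : AffineIndependent ℝ v)
    (N : Fin (n + 2) → EuclideanSpace ℝ (Fin (n + 1)))
    (hN0 : ∀ i, N i ≠ 0)
    (hNorth : ∀ i j k, j ≠ i → k ≠ i → ⟪N i, v j - v k⟫ = 0)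
    (hNin : ∀ i j, j ≠ i → 0 < ⟪N i, v i - v j⟫)
    (φ : Fin (n + 2) → ℝ) (hφ : ∀ i, φ i = 1 ∨ φ i = -1)
    (hφ0 : φ 0 = -1) (hφboth : ∃ i, φ i = 1) :
    {x : EuclideanSpace ℝ (Fin (n + 1)) |
        ∃ c : Fin (n + 2) → Fin (n + 2) → ℝ,
          (∀ i j, 0 ≤ c i j) ∧ (∀ i j, ¬(φ i = -1 ∧ φ j = 1) → c i j = 0) ∧
          x = ∑ i, ∑ j, c i j • (v j - v i)} =
      {x : EuclideanSpace ℝ (Fin (n + 1)) | ∀ i, 0 ≤ φ i * ⟪N i, x⟫} := by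
  classical
  ext x
  simp only [Set.mem_setOf_eq]
  constructor
  · -- easy direction
    rintro ⟨c, hc0, hcz, rfl⟩ m
    simp_rw [inner_sum, real_inner_smul_right, Finset.mul_sum]
    apply Finset.sum_nonneg
    intro i _
    apply Finset.sum_nonneg
    intro j _
    by_cases h : φ i = -1 ∧ φ j = 1
    · obtain ⟨hi, hj⟩ := h
      have hij : j ≠ i := fun e => by rw [e, hi] at hj; norm_num at hj
      rcases eq_or_ne m i with hmi | hmi
      · rw [hmi]
        have h1 := hNin i j hij
        have h2 : ⟪N i, v j - v i⟫ = -⟪N i, v i - v j⟫ := by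
          rw [← neg_sub (v i) (v j), inner_neg_right]
        rw [hi, h2]
        nlinarith [hc0 i j]
      · rcases eq_or_ne m j with hmj | hmj
        · rw [hmj]
          have h1 := hNin j i (Ne.symm hij)
          rw [hj]
          nlinarith [hc0 i j]
        · rw [hNorth m j i (Ne.symm hmj) (Ne.symm hmi), mul_zero, mul_zero]
    · rw [hcz i j h]; simp
  · -- hard direction
    intro hx
    -- reference vertex distinct from k
    set r : Fin (n + 2) → Fin (n + 2) := fun k => if k = 0 then 1 else 0 with hrdef
    have hrne : ∀ k, r k ≠ k := by
      intro k
      simp only [hrdef]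
      split_ifs with h
      · rw [h]; exact one_ne_zero
      · exact fun e => h e.symm
    set D : Fin (n + 2) → ℝ := fun k => ⟪N k, v k - v (r k)⟫ with hDdef
    have hDpos : ∀ k, 0 < D k := fun k => hNin k (r k) (hrne k)
    have hD0 : ∀ k, D k ≠ 0 := fun k => (hDpos k).ne'
    have hD : ∀ k p, p ≠ k → ⟪N k, v k - v p⟫ = D k := by
      intro k p hp
      have h0 : ⟪N k, v p - v (r k)⟫ = 0 := hNorth k p (r k) hp (hrne k)
      have h2 : v k - v p = (v k - v (r k)) - (v p - v (r k)) := by abel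
      rw [h2, inner_sub_right, h0, sub_zero, hDdef]
    set t : Fin (n + 2) → ℝ := fun k => if φ k = -1 then -⟪N k, x⟫ / D k else 0 with htdef
    have ht0 : ∀ k, 0 ≤ t k := by
      intro k
      simp only [htdef]
      split_ifs with h
      · have hk := hx k
        rw [h] at hk
        have hL : ⟪N k, x⟫ ≤ 0 := by nlinarith
        exact div_nonneg (by linarith) (hDpos k).le
      · exact le_refl 0
    set T : ℝ := ∑ k, t k with hTdef
    have hT0 : 0 ≤ T := Finset.sum_nonneg fun k _ => ht0 k
    set a : Fin (n + 2) → ℝ := fun i =>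
      if T = 0 then (if i = 0 then 1 else 0) else t i / T with hadef
    set bb : Fin (n + 2) → ℝ := fun j => if φ j = 1 then ⟪N j, x⟫ / D j else 0 with hbdef
    have ha0 : ∀ i, 0 ≤ a i := by
      intro i
      simp only [hadef]
      split_ifs with h h2
      · norm_num
      · norm_num
      · exact div_nonneg (ht0 i) hT0
    have hb0 : ∀ j, 0 ≤ bb j := by
      intro j
      simp only [hbdef]
      split_ifs with h
      · have hj := hx j
        rw [h, one_mul] at hj
        exact div_nonneg hj (hDpos j).le
      · exact le_refl 0
    have haneg : ∀ i, a i ≠ 0 → φ i = -1 := by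
      intro i hi
      simp only [hadef] at hi
      split_ifs at hi with h h2
      · rw [h2]; exact hφ0
      · exact absurd rfl hi
      · have hti : t i ≠ 0 := fun e => hi (by rw [e, zero_div])
        simp only [htdef] at hti
        by_contra hc
        rw [if_neg hc] at hti
        exact hti rfl
    have hbpos : ∀ j, bb j ≠ 0 → φ j = 1 := by
      intro j hj
      simp only [hbdef] at hj
      by_contra hc
      rw [if_neg hc] at hj
      exact hj rfl
    refine ⟨fun i j => a i * bb j, fun i j => mul_nonneg (ha0 i) (hb0 j), ?_, ?_⟩
    · intro i j h
      show a i * bb j = 0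
      by_contra hc
      have hai : a i ≠ 0 := fun e => hc (by rw [e, zero_mul])
      have hbj : bb j ≠ 0 := fun e => hc (by rw [e, mul_zero])
      exact h ⟨haneg i hai, hbpos j hbj⟩
    · -- the decomposition equation
      show x = ∑ i, ∑ j, (a i * bb j) • (v j - v i)
      symm
      have hsum1 : ∀ i, φ i = -1 → ∑ j, bb j • (v j - v i)
          = x + (∑ j, t j • v j) - T • v i := by
        intro i hi
        have hdec := simplex_decomp v N hv hNorth D hD0 hD i x
        have hterm : ∀ j, bb j • (v j - v i)
            = (if j = i then 0 else ⟪N j, x⟫ / D j) • (v j - v i) + t j • (v j - v i) := by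
          intro j
          rcases eq_or_ne j i with rfl | hji
          · have hne1 : φ j ≠ 1 := by rw [hi]; norm_num
            simp [hbdef, htdef, hi]
          · rcases hφ j with h1 | h1
            · have hne : φ j ≠ -1 := by rw [h1]; norm_num
              simp only [hbdef, htdef, if_pos h1, if_neg hne, if_neg hji, zero_smul, add_zero]
            · have hne1 : φ j ≠ 1 := by rw [h1]; norm_num
              simp only [hbdef, htdef, if_neg hne1, if_pos h1, if_neg hji]
              rw [← add_smul]
              rw [show ⟪N j, x⟫ / D j + -⟪N j, x⟫ / D j = 0 by ring, zero_smul]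
        rw [Finset.sum_congr rfl fun j _ => hterm j, Finset.sum_add_distrib, hdec]
        have h3 : ∑ j, t j • (v j - v i) = (∑ j, t j • v j) - T • v i := by
          simp_rw [smul_sub]
          rw [Finset.sum_sub_distrib, ← Finset.sum_smul, ← hTdef]
        rw [h3]
        abel
      have hstep : ∀ i, ∑ j, (a i * bb j) • (v j - v i)
          = a i • (x + (∑ j, t j • v j) - T • v i) := by
        intro i
        have h4 : ∑ j, (a i * bb j) • (v j - v i) = a i • ∑ j, bb j • (v j - v i) := by
          rw [Finset.smul_sum]
          exact Finset.sum_congr rfl fun j _ => mul_smul _ _ _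
        rw [h4]
        rcases eq_or_ne (a i) 0 with h | h
        · rw [h, zero_smul, zero_smul]
        · rw [hsum1 i (haneg i h)]
      rw [Finset.sum_congr rfl fun i _ => hstep i]
      have hasum : ∑ i, a i = 1 := by
        simp only [hadef]
        rcases eq_or_ne T 0 with h | h
        · simp [h]
        · simp only [if_neg h]
          rw [← Finset.sum_div, ← hTdef, div_self h]
      have hW : ∑ i, a i • (T • v i) = ∑ j, t j • v j := by
        rcases eq_or_ne T 0 with h | h
        · have hsz : ∑ k, t k = 0 := by rw [← hTdef]; exact h
          have htz : ∀ k, t k = 0 := fun k =>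
            (Finset.sum_eq_zero_iff_of_nonneg (fun k _ => ht0 k)).mp hsz k (Finset.mem_univ k)
          simp [h, htz]
        · simp only [hadef, if_neg h]
          refine Finset.sum_congr rfl fun i _ => ?_
          rw [smul_smul, div_mul_cancel₀ _ h]
      calc ∑ i, a i • (x + (∑ j, t j • v j) - T • v i)
          = (∑ i, a i) • x + (∑ i, a i) • (∑ j, t j • v j) - ∑ i, a i • (T • v i) := by
            simp_rw [smul_sub, smul_add]
            rw [Finset.sum_sub_distrib, Finset.sum_add_distrib, Finset.sum_smul, Finset.sum_smul]
        _ = x := by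
            rw [hasum, hW, one_smul, one_smul]
            abel
end

section
/- Let S ⊂ ℝ^{n+1} be a full-dimensional simplex, φ : Vert(S) → {±1} a sign distribution, and suppose exactly one vertex v carries the sign '−' (or exactly one carries '+'). Then the curvature cone C_φ = ∩_{w ∈ Vert(S)} {x : φ(w)·(n_w·x) ≥ 0} equals the cone with apex at the origin generated by the vectors u − v for u ranging over the vertices of the facet F_v opposite v (translated edge vectors from v), i.e. the cone over the facet F_v as seen from v. -/
open scoped RealInnerProductSpace

open Module

/-- for a full-dimensional simplex `S ⊂ ℝ^{n+1}` with inward facet normals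
`N i`, if the sign distribution `φ` assigns `−1` to exactly one vertex `v i₀`, then the
curvature cone `C_φ = {x : φ(w)·⟪N w, x⟫ ≥ 0 ∀ w}` equals the cone with apex the origin
generated by the edge vectors `v u − v i₀` for `u` ranging over the vertices of the facet
opposite `v i₀`. -/
theorem single_minus_cone_is_cone_over_facet {n : ℕ}
    (v : Fin (n + 2) → EuclideanSpace ℝ (Fin (n + 1)))
    (hv : AffineIndependent ℝ v)
    (N : Fin (n + 2) → EuclideanSpace ℝ (Fin (n + 1)))
    (hN0 : ∀ i, N i ≠ 0)
    (hNorth : ∀ i j k, j ≠ i → k ≠ i → ⟪N i, v j - v k⟫ = 0)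
    (hNin : ∀ i j, j ≠ i → 0 < ⟪N i, v i - v j⟫)
    (φ : Fin (n + 2) → ℝ) (hφ : ∀ i, φ i = 1 ∨ φ i = -1)
    (i₀ : Fin (n + 2)) (hi₀ : ∀ i, φ i = -1 ↔ i = i₀) :
    {x : EuclideanSpace ℝ (Fin (n + 1)) | ∀ i, 0 ≤ φ i * ⟪N i, x⟫} =
      {x | ∃ c : Fin (n + 2) → ℝ, (∀ j, 0 ≤ c j) ∧ c i₀ = 0 ∧
        x = ∑ j, c j • (v j - v i₀)} := by
  have hφ1 : ∀ i, i ≠ i₀ → φ i = 1 := by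
    intro i hi
    rcases hφ i with h | h
    · exact h
    · exact absurd ((hi₀ i).mp h) hi
  have hφ0 : φ i₀ = -1 := (hi₀ i₀).mpr rfl
  haveI : Nonempty {j : Fin (n + 2) // j ≠ i₀} := by
    obtain ⟨j, hj⟩ := exists_ne i₀
    exact ⟨⟨j, hj⟩⟩
  -- basis from affine independence
  have hli : LinearIndependent ℝ (fun j : {j : Fin (n + 2) // j ≠ i₀} => v j - v i₀) := by
    have := (affineIndependent_iff_linearIndependent_vsub ℝ v i₀).mp hv
    simpa [vsub_eq_sub] using this
  have hcard : Fintype.card {j : Fin (n + 2) // j ≠ i₀}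
      = finrank ℝ (EuclideanSpace ℝ (Fin (n + 1))) := by
    simp [Fintype.card_subtype_compl]
  let b := basisOfLinearIndependentOfCardEqFinrank hli hcard
  have hb : ∀ j, b j = v j - v i₀ := fun j => by
    simp [b, coe_basisOfLinearIndependentOfCardEqFinrank]
  ext x
  simp only [Set.mem_setOf_eq]
  constructor
  · intro hx
    -- express x in the basis
    have hxsum : x = ∑ j : {j : Fin (n + 2) // j ≠ i₀}, b.repr x j • (v j - v i₀) := by
      conv_lhs => rw [← b.sum_repr x]
      exact Finset.sum_congr rfl fun j _ => by rw [hb]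
    have hinner : ∀ i (hi : i ≠ i₀),
        ⟪N i, x⟫ = b.repr x ⟨i, hi⟩ * ⟪N i, v i - v i₀⟫ := by
      intro i hi
      conv_lhs => rw [hxsum]
      rw [inner_sum]
      rw [Finset.sum_eq_single (⟨i, hi⟩ : {j : Fin (n + 2) // j ≠ i₀})]
      · rw [real_inner_smul_right]
      · intro j _ hj
        have hji : (j : Fin (n + 2)) ≠ i := fun h => hj (Subtype.ext h)
        rw [real_inner_smul_right, hNorth i j i₀ hji (Ne.symm hi), mul_zero]
      · intro h; exact absurd (Finset.mem_univ _) h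
    refine ⟨fun j => if h : j = i₀ then 0 else b.repr x ⟨j, h⟩, ?_, dif_pos rfl, ?_⟩
    · intro j
      by_cases h : j = i₀
      · simp [h]
      · simp only [dif_neg h]
        have h1 := hx j
        rw [hφ1 j h, one_mul, hinner j h] at h1
        nlinarith [hNin j i₀ (Ne.symm h), h1]
    · symm
      calc ∑ j : Fin (n + 2),
            (if h : j = i₀ then (0:ℝ) else b.repr x ⟨j, h⟩) • (v j - v i₀)
          = ∑ j ∈ Finset.univ.erase i₀,
            (if h : j = i₀ then (0:ℝ) else b.repr x ⟨j, h⟩) • (v j - v i₀) :=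
            (Finset.sum_erase _ (by simp)).symm
        _ = ∑ j : {j : Fin (n + 2) // j ≠ i₀},
            (if h : (j : Fin (n + 2)) = i₀ then (0:ℝ) else b.repr x ⟨j, h⟩) • (v j - v i₀) :=
            Finset.sum_subtype _ (fun j => by simp [Finset.mem_erase]) _
        _ = ∑ j : {j : Fin (n + 2) // j ≠ i₀}, b.repr x j • (v j - v i₀) :=
            Finset.sum_congr rfl fun j _ => by rw [dif_neg j.2]
        _ = x := hxsum.symm
  · rintro ⟨c, hc, hci, rfl⟩
    intro i
    rw [inner_sum]
    simp_rw [real_inner_smul_right]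
    by_cases hi : i = i₀
    · subst hi
      rw [hφ0]
      have key : ∀ j, c j * ⟪N i, v j - v i⟫ ≤ 0 := by
        intro j
        by_cases hj : j = i
        · simp [hj, hci]
        · have h1 : ⟪N i, v j - v i⟫ < 0 := by
            have h2 := hNin i j hj
            have heq : ⟪N i, v j - v i⟫ = -⟪N i, v i - v j⟫ := by
              rw [← inner_neg_right]; congr 1; abel
            rw [heq]; linarith
          exact mul_nonpos_of_nonneg_of_nonpos (hc j) h1.le
      have hsum : ∑ j, c j * ⟪N i, v j - v i⟫ ≤ 0 :=
        Finset.sum_nonpos fun j _ => key j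
      nlinarith [hsum]
    · rw [hφ1 i hi, one_mul]
      rw [Finset.sum_eq_single i]
      · exact mul_nonneg (hc i) (hNin i i₀ (Ne.symm hi)).le
      · intro j _ hj
        rw [hNorth i j i₀ hj (Ne.symm hi), mul_zero]
      · intro h; exact absurd (Finset.mem_univ _) h
end
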